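/- In any 2-dimensional spatial election under the Manhattan norm (voters and candidates in ℝ², strict proximity preferences), if S = {c₁, c₂, c₃, c₄} consists of, for each nonempty quadrant (relative to the medians of voter coordinates), the candidate closest to the median point, then S is a Condorcet winning set. -/

import Mathlib

/-- Manhattan (ℓ¹) distance in the plane. -/
noncomputable def d1 (p q : ℝ × ℝ) : ℝ := |p.1 - q.1| + |p.2 - q.2|

/-! Let `j ∉ S` lie in the closed quadrant with signs `(εx, εy)` and let `c ∈ S` be the candidate of
that quadrant closest to the origin. Since `‖c‖₁ ≤ ‖j‖₁`, the step from `c` to `j` moves outwards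
in one coordinate by at least as much as it moves in the other, so every voter on the far side of
the median line in that coordinate is at least as close to `c` as to `j`. That half-plane holds at
least half of the voters, and with `n` odd and no ties they form a strict majority preferring `c`. -/

theorem abs_le_or_abs_le_of_add_nonneg {α : Type*} [AddCommGroup α] [LinearOrder α]
    [IsOrderedAddMonoid α] {p q : α} (h : 0 ≤ p + q) : |p| ≤ q ∨ |q| ≤ p := by
  rcases le_total p q with hpq | hqp
  · exact Or.inl (abs_le.mpr ⟨neg_le_iff_add_nonneg.mpr h, hpq⟩)
  · exact Or.inr (abs_le.mpr ⟨neg_le_iff_add_nonneg'.mpr h, hqp⟩)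

theorem exists_sign_mul_nonneg (a : ℝ) : ∃ ε : ℝ, (ε = 1 ∨ ε = -1) ∧ 0 ≤ ε * a := by
  rcases le_total 0 a with ha | ha
  · exact ⟨1, Or.inl rfl, by simpa using ha⟩
  · exact ⟨-1, Or.inr rfl, by simpa using ha⟩

section Sign

variable {ε : ℝ}

theorem abs_sign_mul (hε : |ε| = 1) (a : ℝ) : |ε * a| = |a| := by
  rw [abs_mul, hε, one_mul]

theorem abs_eq_sign_mul (hε : |ε| = 1) {a : ℝ} (ha : 0 ≤ ε * a) : |a| = ε * a := by
  rw [← abs_sign_mul hε, abs_of_nonneg ha]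

theorem d1_origin_eq {εx εy : ℝ} (hεx : |εx| = 1) (hεy : |εy| = 1) {c : ℝ × ℝ}
    (hc₁ : 0 ≤ εx * c.1) (hc₂ : 0 ≤ εy * c.2) : d1 (0, 0) c = εx * c.1 + εy * c.2 := by
  simp only [d1, zero_sub, abs_neg, abs_eq_sign_mul hεx hc₁, abs_eq_sign_mul hεy hc₂]

theorem d1_le_d1_of_abs_fst_le (hε : |ε| = 1) {v c j : ℝ × ℝ}
    (hcj : |j.1 - c.1| ≤ ε * (j.2 - c.2)) (hv : ε * v.2 ≤ ε * c.2) : d1 v c ≤ d1 v j := by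
  have hc : |v.2 - c.2| = ε * (c.2 - v.2) := by
    rw [abs_sub_comm, abs_eq_sign_mul hε (by linarith)]
  have hj : |v.2 - j.2| = ε * (j.2 - v.2) := by
    rw [abs_sub_comm, abs_eq_sign_mul hε (by linarith [abs_nonneg (j.1 - c.1)])]
  have htri : |v.1 - c.1| ≤ |v.1 - j.1| + |j.1 - c.1| := abs_sub_le _ _ _
  simp only [d1, hc, hj]
  linarith

theorem d1_swap (p q : ℝ × ℝ) : d1 p.swap q.swap = d1 p q := by
  simp only [d1, Prod.fst_swap, Prod.snd_swap, add_comm]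

theorem d1_le_d1_of_abs_snd_le (hε : |ε| = 1) {v c j : ℝ × ℝ}
    (hcj : |j.2 - c.2| ≤ ε * (j.1 - c.1)) (hv : ε * v.1 ≤ ε * c.1) : d1 v c ≤ d1 v j := by
  simpa only [d1_swap] using
    d1_le_d1_of_abs_fst_le hε (v := v.swap) (c := c.swap) (j := j.swap) hcj hv

end Sign

theorem quadrant_halfplane_prefers_closer {εx εy : ℝ} (hεx : |εx| = 1) (hεy : |εy| = 1)
    {c j : ℝ × ℝ} (hc₁ : 0 ≤ εx * c.1) (hc₂ : 0 ≤ εy * c.2)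
    (hj₁ : 0 ≤ εx * j.1) (hj₂ : 0 ≤ εy * j.2) (hcj : d1 (0, 0) c ≤ d1 (0, 0) j) :
    (∀ v : ℝ × ℝ, εy * v.2 ≤ 0 → d1 v c ≤ d1 v j) ∨
      (∀ v : ℝ × ℝ, εx * v.1 ≤ 0 → d1 v c ≤ d1 v j) := by
  rw [d1_origin_eq hεx hεy hc₁ hc₂, d1_origin_eq hεx hεy hj₁ hj₂] at hcj
  rcases abs_le_or_abs_le_of_add_nonneg (p := εx * (j.1 - c.1)) (q := εy * (j.2 - c.2))
    (by linarith) with h | h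
  · refine Or.inl fun v hv => d1_le_d1_of_abs_fst_le hεy ?_ (by linarith)
    rwa [abs_sign_mul hεx] at h
  · refine Or.inr fun v hv => d1_le_d1_of_abs_snd_le hεx ?_ (by linarith)
    rwa [abs_sign_mul hεy] at h

theorem two_mul_card_sign_mul_nonpos {α : Type*} {n : ℕ} (f : α → ℝ) {ε : ℝ}
    (hε : ε = 1 ∨ ε = -1) (hle : 2 * Nat.card {a // f a ≤ 0} ≥ n)
    (hge : 2 * Nat.card {a // 0 ≤ f a} ≥ n) : 2 * Nat.card {a // ε * f a ≤ 0} ≥ n := by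
  rcases hε with rfl | rfl
  · simpa using hle
  · simpa using hge

theorem Odd.lt_two_mul_card_of_imp {α : Type*} [Finite α] {n : ℕ} (hn : Odd n) {P Q : α → Prop}
    (hPQ : ∀ v, P v → Q v) (hP : 2 * Nat.card {v // P v} ≥ n) :
    2 * Nat.card {v // Q v} > n := by
  have hmono : Nat.card {v // P v} ≤ Nat.card {v // Q v} :=
    Nat.card_mono (Set.toFinite {v | Q v}) hPQ
  obtain ⟨k, rfl⟩ := hn
  omega

theorem quadrant_set_is_condorcet_general (n m : ℕ) (hn : Odd n)
    (V : Fin n → ℝ × ℝ) (C : Fin m → ℝ × ℝ)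
    (hdist : ∀ (v : Fin n) (i k : Fin m), i ≠ k → d1 (V v) (C i) ≠ d1 (V v) (C k))
    (hxle : 2 * Nat.card {v : Fin n // (V v).1 ≤ 0} ≥ n)
    (hxge : 2 * Nat.card {v : Fin n // 0 ≤ (V v).1} ≥ n)
    (hyle : 2 * Nat.card {v : Fin n // (V v).2 ≤ 0} ≥ n)
    (hyge : 2 * Nat.card {v : Fin n // 0 ≤ (V v).2} ≥ n)
    (S : Finset (Fin m))
    -- every nonempty closed quadrant contributes such a closest candidate to `S`
    (hScov : ∀ εx εy : ℝ, (εx = 1 ∨ εx = -1) → (εy = 1 ∨ εy = -1) →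
      (∃ k, 0 ≤ εx * (C k).1 ∧ 0 ≤ εy * (C k).2) →
      ∃ i ∈ S, (0 ≤ εx * (C i).1 ∧ 0 ≤ εy * (C i).2) ∧
        ∀ k, (0 ≤ εx * (C k).1 ∧ 0 ≤ εy * (C k).2) → d1 (0, 0) (C i) ≤ d1 (0, 0) (C k)) :
    ∀ j, j ∉ S →
      2 * Nat.card {v : Fin n // ∃ i ∈ S, d1 (V v) (C i) < d1 (V v) (C j)} > n := by
  intro j hj
  obtain ⟨εx, hεx, hj₁⟩ := exists_sign_mul_nonneg (C j).1
  obtain ⟨εy, hεy, hj₂⟩ := exists_sign_mul_nonneg (C j).2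
  obtain ⟨i, hiS, ⟨hi₁, hi₂⟩, hmin⟩ := hScov εx εy hεx hεy ⟨j, hj₁, hj₂⟩
  have hij : i ≠ j := ne_of_mem_of_not_mem hiS hj
  have hprefer :
      ∀ v, d1 (V v) (C i) ≤ d1 (V v) (C j) → ∃ i ∈ S, d1 (V v) (C i) < d1 (V v) (C j) :=
    fun v hv => ⟨i, hiS, hv.lt_of_ne (hdist v i j hij)⟩
  rcases quadrant_halfplane_prefers_closer ((abs_eq zero_le_one).mpr hεx)
      ((abs_eq zero_le_one).mpr hεy) hi₁ hi₂ hj₁ hj₂ (hmin j ⟨hj₁, hj₂⟩) with H | H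
  · exact hn.lt_two_mul_card_of_imp (fun v hv => hprefer v (H (V v) hv))
      (two_mul_card_sign_mul_nonpos (fun v => (V v).2) hεy hyle hyge)
  · exact hn.lt_two_mul_card_of_imp (fun v hv => hprefer v (H (V v) hv))
      (two_mul_card_sign_mul_nonpos (fun v => (V v).1) hεx hxle hxge)

/-- In a 2-dimensional spatial election under the Manhattan norm with strict (tie-free) proximity
preferences, an odd number of voters, and voter coordinate medians at the origin: if `S` consists,
for each nonempty closed quadrant, of a candidate of that quadrant closest (in ℓ¹) to the origin,
then `S` is a Condorcet winning set. -/
theorem quadrant_set_is_condorcet (n m : ℕ) (hn : Odd n)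
    (V : Fin n → ℝ × ℝ) (C : Fin m → ℝ × ℝ)
    (hdist : ∀ (v : Fin n) (i k : Fin m), i ≠ k → d1 (V v) (C i) ≠ d1 (V v) (C k))
    (hxle : 2 * Nat.card {v : Fin n // (V v).1 ≤ 0} ≥ n)
    (hxge : 2 * Nat.card {v : Fin n // 0 ≤ (V v).1} ≥ n)
    (hyle : 2 * Nat.card {v : Fin n // (V v).2 ≤ 0} ≥ n)
    (hyge : 2 * Nat.card {v : Fin n // 0 ≤ (V v).2} ≥ n)
    (S : Finset (Fin m))
    -- every member of `S` is a closest-to-origin candidate of some closed quadrant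
    (hSmin : ∀ i ∈ S, ∃ εx εy : ℝ, (εx = 1 ∨ εx = -1) ∧ (εy = 1 ∨ εy = -1) ∧
      (0 ≤ εx * (C i).1 ∧ 0 ≤ εy * (C i).2) ∧
      ∀ k, (0 ≤ εx * (C k).1 ∧ 0 ≤ εy * (C k).2) → d1 (0, 0) (C i) ≤ d1 (0, 0) (C k))
    -- every nonempty closed quadrant contributes such a closest candidate to `S`
    (hScov : ∀ εx εy : ℝ, (εx = 1 ∨ εx = -1) → (εy = 1 ∨ εy = -1) →
      (∃ k, 0 ≤ εx * (C k).1 ∧ 0 ≤ εy * (C k).2) →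
      ∃ i ∈ S, (0 ≤ εx * (C i).1 ∧ 0 ≤ εy * (C i).2) ∧
        ∀ k, (0 ≤ εx * (C k).1 ∧ 0 ≤ εy * (C k).2) → d1 (0, 0) (C i) ≤ d1 (0, 0) (C k)) :
    ∀ j, j ∉ S →
      2 * Nat.card {v : Fin n // ∃ i ∈ S, d1 (V v) (C i) < d1 (V v) (C j)} > n :=
  quadrant_set_is_condorcet_general n m hn V C hdist hxle hxge hyle hyge S hScov
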